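/- Let G be a 2-connected finitely separable graph, let M be a matroid on the edge set of G whose circuits are exactly the edge sets of (finite) cycles of G, let ℓ ≥ 1 be an integer, and let (X,Y) be an ℓ-separation of M such that the subgraph (V[Y], Y) is connected. Then for every connected component K of the subgraph (V[X], X) we have |V[K] ∩ V[Y]| ≤ ℓ. -/

import Mathlib

open scoped Matroid

variable {V : Type*} {α : Type*}

/-- The set of vertices incident with an edge in `X`. -/
def vertsOf (X : Set (Sym2 V)) : Set V := {v | ∃ e ∈ X, v ∈ e}

/-- A graph is finitely separable if any two distinct vertices can be separated by deleting
finitely many edges. -/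
def FinitelySeparable (G : SimpleGraph V) : Prop :=
  ∀ u v : V, u ≠ v → ∃ F : Set (Sym2 V), F.Finite ∧ ¬ (G.deleteEdges F).Reachable u v

/-- `C` is the edge set of a (finite) cycle of `G`. -/
def IsCycleEdgeSet (G : SimpleGraph V) (C : Set (Sym2 V)) : Prop :=
  ∃ (v : V) (w : G.Walk v v), w.IsCycle ∧ C = {e | e ∈ w.edges}

/-- `M` is the finite-cycle matroid of `G` : its ground set is the edge set of `G` and a set
of edges is independent iff it contains no edge set of a cycle of `G` (equivalently, the
circuits of `M` are precisely the edge sets of cycles of `G`). -/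
def IsFiniteCycleMatroid (G : SimpleGraph V) (M : Matroid (Sym2 V)) : Prop :=
  M.E = G.edgeSet ∧
    ∀ I, M.Indep I ↔ I ⊆ G.edgeSet ∧ ∀ C, IsCycleEdgeSet G C → ¬ C ⊆ I

/-- `F` arises in the definition of the connectivity function `κ_M(X)`: there are a base `B`
of `M|X` and a base `B'` of `M|(E \ X)` with `F ⊆ B ∪ B'` and `(B ∪ B') \ F` a base of `M`;
the connectivity `κ_M(X)` is then `F.encard`. -/
def ConnWitness (M : Matroid α) (X F : Set α) : Prop :=
  ∃ B B', (M ↾ X).IsBase B ∧ (M ↾ (M.E \ X)).IsBase B' ∧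
    F ⊆ B ∪ B' ∧ M.IsBase ((B ∪ B') \ F)

/-- The (vertex sets of the) connected components of the subgraph `(V[X], X)`. -/
def components (X : Set (Sym2 V)) : Set (Set V) :=
  {C | ∃ v ∈ vertsOf X, C = {w | (SimpleGraph.fromEdgeSet X).Reachable v w}}

/-- The subgraph `(V[X], X)` is connected (in particular nonempty). -/
def SubConnected (X : Set (Sym2 V)) : Prop :=
  (vertsOf X).Nonempty ∧
    ∀ u ∈ vertsOf X, ∀ w ∈ vertsOf X, (SimpleGraph.fromEdgeSet X).Reachable u w

/-- The edges of `X` lying inside the vertex set `K`. -/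
def edgesIn (X : Set (Sym2 V)) (K : Set V) : Set (Sym2 V) :=
  {e | e ∈ X ∧ ∀ v ∈ e, v ∈ K}

/-- `G` is 2-connected: connected, more than two vertices, and still connected after
deleting any one vertex. -/
def TwoConnected (G : SimpleGraph V) : Prop :=
  G.Connected ∧ 2 < (Set.univ : Set V).encard ∧
    ∀ v : V, (G.induce ({v}ᶜ : Set V)).Connected

/-- An `ℓ`-Tutte-separation of `G`: a partition `(X, Y)` of the edge set with at least `ℓ`
edges on each side and at most `ℓ` vertices incident both with an edge of `X` and with an
edge of `Y`. -/
def TutteSep (G : SimpleGraph V) (ℓ : ℕ) (X Y : Set (Sym2 V)) : Prop :=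
  X ∪ Y = G.edgeSet ∧ Disjoint X Y ∧ (ℓ : ℕ∞) ≤ X.encard ∧ (ℓ : ℕ∞) ≤ Y.encard ∧
    (vertsOf X ∩ vertsOf Y).encard ≤ (ℓ : ℕ∞)

/-- `G` is `k`-Tutte-connected: it has no `ℓ`-Tutte-separation for any `1 ≤ ℓ < k`. -/
def TutteConnected (G : SimpleGraph V) (k : ℕ) : Prop :=
  ∀ ℓ : ℕ, 1 ≤ ℓ → ℓ < k → ∀ X Y : Set (Sym2 V), ¬ TutteSep G ℓ X Y

/-- An `ℓ`-separation of the matroid `M`: a partition `(X, Y)` of the ground set with at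
least `ℓ` elements on each side and `κ_M(X) ≤ ℓ - 1`. -/
def MatSep (M : Matroid α) (ℓ : ℕ) (X Y : Set α) : Prop :=
  X ∪ Y = M.E ∧ Disjoint X Y ∧ (ℓ : ℕ∞) ≤ X.encard ∧ (ℓ : ℕ∞) ≤ Y.encard ∧
    ∀ F, ConnWitness M X F → F.encard + 1 ≤ (ℓ : ℕ∞)

/-- `M` is `k`-connected: it has no `ℓ`-separation for any `1 ≤ ℓ < k`. -/
def MatConnected (M : Matroid α) (k : ℕ) : Prop :=
  ∀ ℓ : ℕ, 1 ≤ ℓ → ℓ < k → ∀ X Y : Set α, ¬ MatSep M ℓ X Y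
section Helpers

open SimpleGraph

variable {V : Type*}

private lemma vertsOf_union' (A B : Set (Sym2 V)) : vertsOf (A ∪ B) = vertsOf A ∪ vertsOf B := by
  ext v; simp [vertsOf, or_and_right, exists_or]

private lemma vertsOf_mono' {A B : Set (Sym2 V)} (h : A ⊆ B) : vertsOf A ⊆ vertsOf B :=
  fun _ ⟨e, he, hv⟩ => ⟨e, h he, hv⟩

private lemma support_reach {S : Set (Sym2 V)} {a b : V} (w : (fromEdgeSet S).Walk a b) :
    ∀ v ∈ w.support, v ∈ vertsOf S ∪ {a} := by
  induction w with
  | nil => intro v hv; simp at hv; simp [hv]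
  | @cons x c y h q ih =>
    intro v hv
    rw [Walk.support_cons, List.mem_cons] at hv
    rcases hv with rfl | hv
    · exact Or.inr rfl
    · rcases ih v hv with h' | h'
      · exact Or.inl h'
      · rw [fromEdgeSet_adj] at h
        have hvc : v = c := h'
        exact Or.inl ⟨s(x,c), h.1, by simp [hvc]⟩

private lemma mem_support_of_mem_edges' {G : SimpleGraph V} {a b v : V} (w : G.Walk a b)
    {e : Sym2 V} (he : e ∈ w.edges) (hv : v ∈ e) : v ∈ w.support := by
  obtain ⟨u, rfl⟩ := Sym2.mem_iff_exists.mp hv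
  exact w.fst_mem_support_of_mem_edges he

private lemma vertsOf_finite {S : Set (Sym2 V)} (hS : S.Finite) : (vertsOf S).Finite := by
  have : vertsOf S = ⋃ e ∈ S, {v | v ∈ e} := by
    ext v; simp [vertsOf]
  rw [this]
  refine hS.biUnion fun e _ => ?_
  induction e using Sym2.ind with
  | _ a b =>
    have : {v | v ∈ s(a,b)} = {a, b} := by ext v; simp [Sym2.mem_iff]
    rw [this]; exact (Set.finite_singleton b).insert a

private lemma reach_local {B : Set (Sym2 V)} {a b : V} (h : (fromEdgeSet B).Reachable a b) :
    ∃ E₀ : Set (Sym2 V), E₀.Finite ∧ E₀ ⊆ B ∧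
      (∀ v ∈ vertsOf E₀ ∪ {a}, (fromEdgeSet E₀).Reachable a v) ∧
      (fromEdgeSet E₀).Reachable a b := by
  classical
  obtain ⟨w⟩ := h
  have hedges : ∀ e ∈ w.edges, e ∈ (fromEdgeSet {e | e ∈ w.edges}).edgeSet := by
    intro e he
    rw [edgeSet_fromEdgeSet]
    refine ⟨he, ?_⟩
    have h2 := w.edges_subset_edgeSet he
    rw [edgeSet_fromEdgeSet] at h2
    exact h2.2
  refine ⟨{e | e ∈ w.edges}, w.edges.finite_toSet, ?_, ?_, ⟨w.transfer _ hedges⟩⟩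
  · intro e he
    exact (Set.diff_subset) (edgeSet_fromEdgeSet B ▸ w.edges_subset_edgeSet he)
  · intro v hv
    rcases hv with hv | hv
    · obtain ⟨e, he, hve⟩ := hv
      have hsup : v ∈ w.support := mem_support_of_mem_edges' w he hve
      have hsup' : v ∈ (w.transfer _ hedges).support := by
        rw [Walk.support_transfer]; exact hsup
      exact ⟨(w.transfer _ hedges).takeUntil v hsup'⟩
    · have : v = a := hv
      rw [this]


open SimpleGraph
open scoped Matroid
/-- an M-independent set of edges spans an acyclic graph -/
lemma indep_acyclic {G : SimpleGraph V} {M : Matroid (Sym2 V)} (hM : IsFiniteCycleMatroid G M)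
    {I : Set (Sym2 V)} (hI : M.Indep I) : (fromEdgeSet I).IsAcyclic := by
  obtain ⟨hIE, hcyc⟩ := (hM.2 I).mp hI
  intro v c hc
  have hedges : ∀ e ∈ c.edges, e ∈ G.edgeSet := by
    intro e he
    exact hIE ((Set.diff_subset) (edgeSet_fromEdgeSet I ▸ c.edges_subset_edgeSet he))
  refine hcyc {e | e ∈ (c.transfer G hedges).edges} ⟨v, c.transfer G hedges, hc.transfer _, rfl⟩ ?_
  intro e he
  rw [Set.mem_setOf_eq, c.edges_transfer hedges] at he
  exact (Set.diff_subset) (edgeSet_fromEdgeSet I ▸ c.edges_subset_edgeSet he)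

/-- a base of M restricted to Z connects whatever Z connects -/
lemma reach_base {G : SimpleGraph V} {M : Matroid (Sym2 V)} (hM : IsFiniteCycleMatroid G M)
    {Z B : Set (Sym2 V)} (hZE : Z ⊆ G.edgeSet) (hB : (M ↾ Z).IsBase B) :
    ∀ u v : V, (fromEdgeSet Z).Reachable u v → (fromEdgeSet B).Reachable u v := by
  have hBi : M.Indep B ∧ B ⊆ Z := Matroid.restrict_indep_iff.mp hB.indep
  have step : ∀ a b : V, (fromEdgeSet Z).Adj a b → (fromEdgeSet B).Reachable a b := by
    intro a b hab
    rw [fromEdgeSet_adj] at hab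
    obtain ⟨heZ, hne⟩ := hab
    by_contra hnr
    -- insert s(a,b) B is independent in M ↾ Z
    have hind : (M ↾ Z).Indep (insert s(a,b) B) := by
      rw [Matroid.restrict_indep_iff]
      refine ⟨(hM.2 _).mpr ⟨?_, ?_⟩, Set.insert_subset heZ hBi.2⟩
      · exact Set.insert_subset (hZE heZ) (hBi.2.trans hZE)
      · rintro C ⟨v, w, hw, rfl⟩ hsub
        by_cases he : s(a,b) ∈ w.edges
        · -- transfer the cycle into fromEdgeSet (insert s(a,b) B); bridge argument
          set G₂ := fromEdgeSet (insert s(a,b) B) with hG₂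
          have hedges : ∀ e ∈ w.edges, e ∈ G₂.edgeSet := by
            intro e hew
            rw [hG₂, edgeSet_fromEdgeSet]
            exact ⟨hsub hew, G.not_isDiag_of_mem_edgeSet (w.edges_subset_edgeSet hew)⟩
          have hbridge : G₂.IsBridge s(a,b) := by
            rw [isBridge_iff]
            · intro hr
              refine hnr (hr.mono ?_)
              intro x y hxy
              obtain ⟨hxy2, hxy3⟩ := hxy
              rw [hG₂, fromEdgeSet_adj] at hxy2
              rw [fromEdgeSet_adj]
              refine ⟨?_, hxy2.2⟩
              rcases Set.mem_insert_iff.mp hxy2.1 with h | h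
              · exact absurd (by rw [fromEdgeSet_adj]; exact ⟨h ▸ rfl, hxy2.2⟩) hxy3
              · exact h
          rw [isBridge_iff_mem_and_forall_cycle_notMem (by rw [hG₂, mem_edgeSet, fromEdgeSet_adj]; exact ⟨Set.mem_insert _ _, hne⟩)] at hbridge
          have hC := hbridge (w.transfer G₂ hedges) (hw.transfer hedges)
          rw [w.edges_transfer hedges] at hC
          exact hC he
        · -- cycle avoids the new edge, so lies in B : contradiction with independence
          obtain ⟨-, hcyc⟩ := (hM.2 B).mp hBi.1
          refine hcyc _ ⟨v, w, hw, rfl⟩ ?_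
          intro e hew
          rcases Set.mem_insert_iff.mp (hsub hew) with h | h
          · exact absurd (h ▸ hew) he
          · exact h
    have := hB.eq_of_subset_indep hind (Set.subset_insert _ _)
    have heB : s(a,b) ∈ B := this ▸ Set.mem_insert _ _
    exact hnr ⟨Walk.cons ((fromEdgeSet_adj _).mpr ⟨heB, hne⟩) Walk.nil⟩
  intro u v huv
  obtain ⟨w⟩ := huv
  induction w with
  | nil => rfl
  | cons h q ih => exact (step _ _ h).trans ih

lemma conn_count {S : Set (Sym2 V)} (hS : S.Finite) (v₀ : V) :
    {v | (fromEdgeSet S).Reachable v₀ v}.Finite ∧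
    {v | (fromEdgeSet S).Reachable v₀ v}.ncard ≤ S.ncard + 1 := by
  set G' := fromEdgeSet S with hG'
  set R := {v | G'.Reachable v₀ v} with hR
  have key : ∀ v ∈ R \ {v₀}, ∃ u, G'.Adj v u ∧ G'.dist u v₀ < G'.dist v v₀ := by
    rintro v ⟨hv, hne⟩
    have hne' : v ≠ v₀ := hne
    have hr : G'.Reachable v v₀ := (show G'.Reachable v₀ v from hv).symm
    obtain ⟨p, hp, hlen⟩ := hr.exists_path_of_dist
    cases p with
    | nil => exact absurd rfl hne'
    | @cons _ c _ h q =>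
      refine ⟨c, h, ?_⟩
      have h1 : G'.dist c v₀ ≤ q.length := dist_le q
      have h2 : (Walk.cons h q).length = q.length + 1 := Walk.length_cons _ _
      omega
  choose! f hadj hdist using key
  have himg : (fun v => s(v, f v)) '' (R \ {v₀}) ⊆ S := by
    rintro e ⟨v, hv, rfl⟩
    exact ((fromEdgeSet_adj _).mp (hadj v hv)).1
  have hinj : Set.InjOn (fun v => s(v, f v)) (R \ {v₀}) := by
    intro v hv w hw he
    simp only [Sym2.eq_iff] at he
    rcases he with ⟨rfl, _⟩ | ⟨h1, h2⟩
    · rfl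
    · have d1 := hdist v hv
      have d2 := hdist w hw
      rw [h2] at d1
      rw [← h1] at d2
      omega
  have hfin' : (R \ {v₀}).Finite :=
    Set.Finite.of_finite_image (hS.subset himg) hinj
  have hRfin : R.Finite := by
    have : R ⊆ insert v₀ (R \ {v₀}) := by
      intro v hv; by_cases h : v = v₀ <;> simp [h, hv]
    exact (hfin'.insert v₀).subset this
  refine ⟨hRfin, ?_⟩
  have h1 : (R \ {v₀}).ncard ≤ S.ncard := by
    rw [← Set.ncard_image_of_injOn hinj]
    exact Set.ncard_le_ncard himg hS
  have h2 : R ⊆ insert v₀ (R \ {v₀}) := by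
    intro v hv; by_cases h : v = v₀ <;> simp [h, hv]
  calc R.ncard ≤ (insert v₀ (R \ {v₀})).ncard := Set.ncard_le_ncard h2 (hfin'.insert v₀)
    _ ≤ (R \ {v₀}).ncard + 1 := Set.ncard_insert_le _ _
    _ ≤ S.ncard + 1 := by omega

lemma acyclic_count {S : Set (Sym2 V)} (hS : S.Finite) (hnd : ∀ e ∈ S, ¬ e.IsDiag)
    (hA : (fromEdgeSet S).IsAcyclic) (hne : S.Nonempty) :
    S.ncard + 1 ≤ (vertsOf S).ncard := by
  classical
  set G' := fromEdgeSet S with hG'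
  set root : V → V := fun v => (G'.connectedComponentMk v).out with hrootdef
  have hroot : ∀ v, G'.Reachable v (root v) := by
    intro v
    have h : G'.connectedComponentMk ((G'.connectedComponentMk v).out) =
        G'.connectedComponentMk v := (G'.connectedComponentMk v).out_eq
    exact (ConnectedComponent.eq.mp h).symm
  have hrooteq : ∀ {a b : V}, G'.Reachable a b → root a = root b := by
    intro a b h
    simp only [hrootdef]
    rw [ConnectedComponent.eq.mpr h]
  set d : V → ℕ := fun v => G'.dist v (root v) with hd
  -- Claim A : adjacent vertices have different heights
  have claimA : ∀ a b, G'.Adj a b → d a ≠ d b := by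
    intro a b hab heq
    have hr : root a = root b := hrooteq hab.reachable
    have hra : G'.Reachable a (root b) := hr ▸ hroot a
    have hrb : G'.Reachable b (root b) := hroot b
    have hda : d a = G'.dist a (root b) := by simp only [hd, hr]
    have hdb : d b = G'.dist b (root b) := rfl
    obtain ⟨p, hp, hlen⟩ := hrb.exists_path_of_dist
    by_cases hmem : a ∈ p.support
    · have hsplit := p.take_spec hmem
      have hlen2 : (p.takeUntil a hmem).length + (p.dropUntil a hmem).length = p.length := by
        rw [← Walk.length_append, hsplit]
      have h1 : G'.dist a (root b) ≤ (p.dropUntil a hmem).length := dist_le _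
      have h2 : 0 < (p.takeUntil a hmem).length := by
        rcases Nat.eq_zero_or_pos (p.takeUntil a hmem).length with h | h
        · exact absurd (Walk.eq_of_length_eq_zero h) hab.ne'
        · exact h
      omega
    · have hq : (Walk.cons hab p).IsPath := hp.cons hmem
      obtain ⟨p', hp', hlen'⟩ := hra.exists_path_of_dist
      have hup := hA.path_unique ⟨Walk.cons hab p, hq⟩ ⟨p', hp'⟩
      have hlq := congrArg (fun q : G'.Path a (root b) => q.val.length) hup
      simp only [Walk.length_cons] at hlq
      omega
  -- Claim B : unique parent
  have claimB : ∀ v a b, G'.Adj v a → G'.Adj v b → d a < d v → d b < d v → a = b := by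
    intro v a b hva hvb hda hdb
    have hrva : root v = root a := hrooteq hva.reachable
    have hrvb : root v = root b := hrooteq hvb.reachable
    have hda' : d a = G'.dist a (root v) := by simp only [hd, hrva]
    have hdb' : d b = G'.dist b (root v) := by simp only [hd, hrvb]
    have hdv : d v = G'.dist v (root v) := rfl
    obtain ⟨pa, hpa, hla⟩ := (hrva ▸ hroot a : G'.Reachable a (root v)).exists_path_of_dist
    obtain ⟨pb, hpb, hlb⟩ := (hrvb ▸ hroot b : G'.Reachable b (root v)).exists_path_of_dist
    have hva' : v ∉ pa.support := by
      intro hmem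
      have h1 : G'.dist v (root v) ≤ (pa.dropUntil v hmem).length := dist_le _
      have h2 : (pa.dropUntil v hmem).length ≤ pa.length := by
        have hsplit := pa.take_spec hmem
        have := congrArg Walk.length hsplit
        rw [Walk.length_append] at this
        omega
      omega
    have hvb' : v ∉ pb.support := by
      intro hmem
      have h1 : G'.dist v (root v) ≤ (pb.dropUntil v hmem).length := dist_le _
      have h2 : (pb.dropUntil v hmem).length ≤ pb.length := by
        have hsplit := pb.take_spec hmem
        have := congrArg Walk.length hsplit
        rw [Walk.length_append] at this
        omega
      omega
    have hup := hA.path_unique ⟨Walk.cons hva pa, hpa.cons hva'⟩ ⟨Walk.cons hvb pb, hpb.cons hvb'⟩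
    have hsup := congrArg (fun q : G'.Path v (root v) => q.val.support) hup
    simp only [Walk.support_cons] at hsup
    have h1 : pa.support = pb.support := by
      injection hsup
    rw [pa.support_eq_cons, pb.support_eq_cons] at h1
    injection h1
  have : Nonempty V := by
    obtain ⟨e₀, he₀⟩ := hne
    induction e₀ using Sym2.ind with
    | _ a b => exact ⟨a⟩
  -- the "maximal endpoint" of each edge
  have key : ∀ e ∈ S, ∃ v, v ∈ e ∧ ∀ u ∈ e, u ≠ v → G'.Adj u v ∧ d u < d v := by
    intro e he
    induction e using Sym2.ind with
    | _ a b =>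
      have hab : a ≠ b := fun h => hnd _ he (by simp [h])
      have hadj : G'.Adj a b := (fromEdgeSet_adj _).mpr ⟨he, hab⟩
      rcases lt_or_gt_of_ne (claimA a b hadj) with h | h
      · refine ⟨b, by simp, fun u hu hub => ?_⟩
        rcases Sym2.mem_iff.mp hu with rfl | rfl
        · exact ⟨hadj, h⟩
        · exact absurd rfl hub
      · refine ⟨a, by simp, fun u hu hua => ?_⟩
        rcases Sym2.mem_iff.mp hu with rfl | rfl
        · exact absurd rfl hua
        · exact ⟨hadj.symm, h⟩
  choose! pick hpickmem hpickprop using key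
  have hinj : Set.InjOn pick S := by
    intro e₁ h₁ e₂ h₂ hpe
    obtain ⟨u₁, he₁⟩ := Sym2.mem_iff_exists.mp (hpickmem e₁ h₁)
    obtain ⟨u₂, he₂⟩ := Sym2.mem_iff_exists.mp (hpickmem e₂ h₂)
    have hu₁ : u₁ ≠ pick e₁ := by
      intro h; exact hnd _ h₁ (by rw [he₁, h]; simp)
    have hu₂ : u₂ ≠ pick e₂ := by
      intro h; exact hnd _ h₂ (by rw [he₂, h]; simp)
    have hp₁ := hpickprop e₁ h₁ u₁ (by rw [he₁]; simp) hu₁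
    have hp₂ := hpickprop e₂ h₂ u₂ (by rw [he₂]; simp) hu₂
    rw [hpe] at hp₁ he₁
    have huu : u₁ = u₂ := claimB (pick e₂) u₁ u₂ hp₁.1.symm hp₂.1.symm hp₁.2 hp₂.2
    rw [huu] at he₁
    rw [he₁, ← he₂]
  -- roots
  set Roots : Set V := vertsOf S ∩ {v | root v = v} with hRoots
  have himgsub : pick '' S ⊆ vertsOf S \ Roots := by
    rintro w ⟨e, he, rfl⟩
    obtain ⟨u, heu⟩ := Sym2.mem_iff_exists.mp (hpickmem e he)
    have hu : u ≠ pick e := by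
      intro h; exact hnd _ he (by rw [heu, h]; simp)
    have hp := hpickprop e he u (by rw [heu]; simp) hu
    refine ⟨⟨e, he, hpickmem e he⟩, ?_⟩
    rintro ⟨-, hroot'⟩
    have : d (pick e) = 0 := by
      simp only [hd]
      rw [show root (pick e) = pick e from hroot']
      exact SimpleGraph.dist_self
    omega
  have hRne : Roots.Nonempty := by
    obtain ⟨e₀, he₀⟩ := hne
    have hv : ∃ a, a ∈ e₀ := by
      induction e₀ using Sym2.ind with
      | _ a b => exact ⟨a, by simp⟩
    obtain ⟨a, ha⟩ := hv
    have haS : a ∈ vertsOf S := ⟨e₀, he₀, ha⟩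
    refine ⟨root a, ?_, ?_⟩
    · by_cases h : root a = a
      · rwa [h]
      · obtain ⟨w⟩ := hroot a
        have := support_reach w (root a) w.end_mem_support
        rcases this with h' | h'
        · exact h'
        · exact absurd h' h
    · exact (hrooteq (hroot a)).symm
  -- count
  have hvfin := vertsOf_finite hS
  have hRsub : Roots ⊆ vertsOf S := Set.inter_subset_left
  have h1 : S.ncard = (pick '' S).ncard := (Set.ncard_image_of_injOn hinj).symm
  have h2 : (pick '' S).ncard ≤ (vertsOf S \ Roots).ncard :=
    Set.ncard_le_ncard himgsub (hvfin.subset Set.diff_subset)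
  have h3 : (vertsOf S \ Roots).ncard + Roots.ncard = (vertsOf S).ncard :=
    Set.ncard_diff_add_ncard_of_subset hRsub hvfin
  have h4 : 0 < Roots.ncard := (Set.ncard_pos (hvfin.subset hRsub)).mpr hRne
  omega

end Helpers

/-- Let `G` be a 2-connected finitely separable graph with finite-cycle
matroid `M`, let `ℓ ≥ 1`, and let `(X, Y)` be an `ℓ`-separation of `M` with `(V[Y], Y)`
connected. Then every component `K` of `(V[X], X)` satisfies `|V[K] ∩ V[Y]| ≤ ℓ`. -/
theorem comp_meets_Y_in_few_vertices {V : Type*} (G : SimpleGraph V) (h2 : TwoConnected G)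
    (hfs : FinitelySeparable G) (M : Matroid (Sym2 V)) (hM : IsFiniteCycleMatroid G M)
    (ℓ : ℕ) (hℓ : 1 ≤ ℓ) (X Y : Set (Sym2 V)) (hsep : MatSep M ℓ X Y)
    (hYconn : SubConnected Y) :
    ∀ K ∈ components X, (K ∩ vertsOf Y).encard ≤ (ℓ : ℕ∞) := by
  classical
  open SimpleGraph in
  rintro K ⟨v, hvX, rfl⟩
  by_contra hcon
  push_neg at hcon
  obtain ⟨hXY, hdj, hXl, hYl, hκ⟩ := hsep
  obtain ⟨hME, hMI⟩ := hM
  have hXE : X ⊆ M.E := hXY ▸ Set.subset_union_left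
  have hYE : Y ⊆ M.E := hXY ▸ Set.subset_union_right
  have hXG : X ⊆ G.edgeSet := hME ▸ hXE
  have hYG : Y ⊆ G.edgeSet := hME ▸ hYE
  have hYeq : M.E \ X = Y := by
    rw [← hXY, Set.union_diff_left, hdj.symm.sdiff_eq_left]
  -- choose bases of the two restrictions
  obtain ⟨B, hB⟩ := (M ↾ X).exists_isBase
  obtain ⟨B', hB'⟩ := (M ↾ Y).exists_isBase
  have hBX : B ⊆ X := hB.subset_ground
  have hB'Y : B' ⊆ Y := hB'.subset_ground
  have hBbasis : M.IsBasis B X := (Matroid.isBase_restrict_iff hXE).mp hB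
  have hB'basis : M.IsBasis B' Y := (Matroid.isBase_restrict_iff hYE).mp hB'
  -- their union is spanning; extract a base T and a connectivity witness F
  have hBBE : B ∪ B' ⊆ M.E := Set.union_subset (hBX.trans hXE) (hB'Y.trans hYE)
  have hsp : M.Spanning (B ∪ B') := by
    rw [Matroid.spanning_iff_ground_subset_closure hBBE, ← hXY]
    refine Set.union_subset ?_ ?_
    · exact hBbasis.subset_closure.trans (M.closure_subset_closure Set.subset_union_left)
    · exact hB'basis.subset_closure.trans (M.closure_subset_closure Set.subset_union_right)
  obtain ⟨T, hT, hTsub⟩ := hsp.exists_isBase_subset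
  set F := (B ∪ B') \ T with hFdef
  have hwit : ConnWitness M X F := by
    refine ⟨B, B', hB, by rwa [hYeq], Set.diff_subset, ?_⟩
    rw [hFdef, Set.diff_diff_right_self, Set.inter_eq_self_of_subset_right hTsub]
    exact hT
  have hκF := hκ F hwit
  have hFfin : F.Finite := by
    rw [← Set.encard_ne_top_iff]
    intro h
    rw [h] at hκF
    simp at hκF
  have hFcard : F.ncard + 1 ≤ ℓ := by
    rw [← hFfin.cast_ncard_eq] at hκF
    exact_mod_cast hκF
  -- choose ℓ + 1 vertices in the intersection
  have hcard1 : ((ℓ + 1 : ℕ) : ℕ∞) ≤ ({w | (fromEdgeSet X).Reachable v w} ∩ vertsOf Y).encard := by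
    push_cast
    exact Order.add_one_le_of_lt hcon
  obtain ⟨S₀, hS₀sub, hS₀card⟩ := Set.exists_subset_encard_eq hcard1
  have hS₀fin : S₀.Finite := Set.finite_of_encard_eq_coe hS₀card
  have hS₀n : S₀.ncard = ℓ + 1 := by
    have h := hS₀fin.cast_ncard_eq.trans hS₀card
    exact_mod_cast h
  have hS₀ne : S₀.Nonempty := by
    rw [← Set.ncard_pos hS₀fin]; omega
  obtain ⟨s₀, hs₀⟩ := hS₀ne
  -- all chosen vertices are reachable from s₀ in the forests B and B'
  have hreachX : ∀ s ∈ S₀, (fromEdgeSet B).Reachable s₀ s := by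
    intro s hs
    exact reach_base ⟨hME, hMI⟩ hXG hB s₀ s (((hS₀sub hs₀).1).symm.trans (hS₀sub hs).1)
  have hreachY : ∀ s ∈ S₀, (fromEdgeSet B').Reachable s₀ s := by
    intro s hs
    exact reach_base ⟨hME, hMI⟩ hYG hB' s₀ s
      (hYconn.2 s₀ (hS₀sub hs₀).2 s (hS₀sub hs).2)
  -- localize to finite edge sets
  choose! EX hEXfin hEXsub hEXreach hEXs using fun s hs => reach_local (hreachX s hs)
  choose! EY hEYfin hEYsub hEYreach hEYs using fun s hs => reach_local (hreachY s hs)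
  set DX := ⋃ s ∈ S₀, EX s with hDXdef
  set DY := ⋃ s ∈ S₀, EY s with hDYdef
  have hDXB : DX ⊆ B := Set.iUnion₂_subset fun s hs => hEXsub s hs
  have hDYB' : DY ⊆ B' := Set.iUnion₂_subset fun s hs => hEYsub s hs
  have hDXfin : DX.Finite := hS₀fin.biUnion fun s hs => hEXfin s hs
  have hDYfin : DY.Finite := hS₀fin.biUnion fun s hs => hEYfin s hs
  set RX := {u | (fromEdgeSet DX).Reachable s₀ u} with hRXdef
  set RY := {u | (fromEdgeSet DY).Reachable s₀ u} with hRYdef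
  have hmonoX : ∀ s ∈ S₀, ∀ u, (fromEdgeSet (EX s)).Reachable s₀ u → u ∈ RX := by
    intro s hs u hu
    exact hu.mono (fromEdgeSet_mono (Set.subset_biUnion_of_mem hs))
  have hmonoY : ∀ s ∈ S₀, ∀ u, (fromEdgeSet (EY s)).Reachable s₀ u → u ∈ RY := by
    intro s hs u hu
    exact hu.mono (fromEdgeSet_mono (Set.subset_biUnion_of_mem hs))
  have hS₀RX : S₀ ⊆ RX := fun s hs => hmonoX s hs s (hEXs s hs)
  have hS₀RY : S₀ ⊆ RY := fun s hs => hmonoY s hs s (hEYs s hs)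
  have hvertsRX : vertsOf DX ∪ {s₀} ⊆ RX := by
    rintro u (hu | hu)
    · obtain ⟨e, he, hue⟩ := hu
      rw [hDXdef, Set.mem_iUnion₂] at he
      obtain ⟨s, hs, he⟩ := he
      exact hmonoX s hs u (hEXreach s hs u (Or.inl ⟨e, he, hue⟩))
    · have : u = s₀ := hu
      rw [this]; exact Reachable.refl _
  have hvertsRY : vertsOf DY ∪ {s₀} ⊆ RY := by
    rintro u (hu | hu)
    · obtain ⟨e, he, hue⟩ := hu
      rw [hDYdef, Set.mem_iUnion₂] at he
      obtain ⟨s, hs, he⟩ := he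
      exact hmonoY s hs u (hEYreach s hs u (Or.inl ⟨e, he, hue⟩))
    · have : u = s₀ := hu
      rw [this]; exact Reachable.refl _
  obtain ⟨hRXfin, hRXcard⟩ := conn_count hDXfin s₀
  obtain ⟨hRYfin, hRYcard⟩ := conn_count hDYfin s₀
  rw [← hRXdef] at hRXcard hRXfin
  rw [← hRYdef] at hRYcard hRYfin
  -- the combined local edge set
  set D := DX ∪ DY with hDdef
  have hDBB : D ⊆ B ∪ B' := Set.union_subset_union hDXB hDYB'
  have hDfin : D.Finite := hDXfin.union hDYfin
  have hDG : D ⊆ G.edgeSet := hDBB.trans (Set.union_subset (hBX.trans hXG) (hB'Y.trans hYG))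
  have hDFT : D \ F ⊆ T := by
    rintro e ⟨heD, heF⟩
    by_contra heT
    exact heF ⟨hDBB heD, heT⟩
  have hacyc : (fromEdgeSet (D \ F)).IsAcyclic :=
    indep_acyclic ⟨hME, hMI⟩ (hT.indep.subset hDFT)
  have hnd : ∀ e ∈ D \ F, ¬ e.IsDiag := fun e he =>
    G.not_isDiag_of_mem_edgeSet (hDG he.1)
  -- counting
  have hDdisj : Disjoint DX DY := hdj.mono (hDXB.trans hBX) (hDYB'.trans hB'Y)
  have hDcard : D.ncard = DX.ncard + DY.ncard := Set.ncard_union_eq hDdisj hDXfin hDYfin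
  have hsub1 : vertsOf D ∪ {s₀} ⊆ RX ∪ RY := by
    rw [hDdef, vertsOf_union']
    rintro u ((hu | hu) | hu)
    · exact Or.inl (hvertsRX (Or.inl hu))
    · exact Or.inr (hvertsRY (Or.inl hu))
    · exact Or.inl (hvertsRX (Or.inr hu))
  have hsub2 : S₀ ⊆ RX ∩ RY := Set.subset_inter hS₀RX hS₀RY
  have hUfin : (RX ∪ RY).Finite := hRXfin.union hRYfin
  have hcount1 : (RX ∪ RY).ncard + (RX ∩ RY).ncard = RX.ncard + RY.ncard :=
    Set.ncard_union_add_ncard_inter RX RY hRXfin hRYfin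
  have hc2 : (vertsOf D ∪ {s₀}).ncard ≤ (RX ∪ RY).ncard :=
    Set.ncard_le_ncard hsub1 hUfin
  have hc3 : ℓ + 1 ≤ (RX ∩ RY).ncard := by
    rw [← hS₀n]
    exact Set.ncard_le_ncard hsub2 (hRXfin.subset Set.inter_subset_left)
  have hc4 : D.ncard ≤ (D \ F).ncard + F.ncard := by
    have h := Set.ncard_union_le (D \ F) F
    have h2 : D ⊆ (D \ F) ∪ F := by
      intro e he
      by_cases hf : e ∈ F
      · exact Or.inr hf
      · exact Or.inl ⟨he, hf⟩
    exact le_trans (Set.ncard_le_ncard h2 ((hDfin.diff (t := F)).union hFfin)) h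
  have hc5 : 1 ≤ (vertsOf D ∪ {s₀}).ncard := by
    rw [Nat.one_le_iff_ne_zero, ← Nat.pos_iff_ne_zero, Set.ncard_pos (hUfin.subset hsub1)]
    exact ⟨s₀, Or.inr rfl⟩
  have hDFlarge : (vertsOf D ∪ {s₀}).ncard ≤ (D \ F).ncard := by omega
  have hDFne : (D \ F).Nonempty := by
    rw [← Set.ncard_pos (hDfin.diff (t := F))]
    omega
  have hfinal := acyclic_count (hDfin.diff (t := F)) hnd hacyc hDFne
  have hlast : (vertsOf (D \ F)).ncard ≤ (vertsOf D ∪ {s₀}).ncard :=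
    Set.ncard_le_ncard ((vertsOf_mono' Set.diff_subset).trans Set.subset_union_left)
      (hUfin.subset hsub1)
  omega
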